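/- Let N ≥ 1, 𝐭 ∈ ℕ̄₊^{2N}, and a ∈ ℤ. Suppose (𝐭^{(n)})_{n≥0} is a sequence in ℕ̄₊^{2N} converging to 𝐭 componentwise (where a sequence in ℕ̄₊ converges to a finite value iff it is eventually equal to it, and converges to ∞ iff it tends to ∞). Then lim_{n→∞} Δ_{𝐭^{(n)}}(a) = Δ_𝐭(a). -/

import Mathlib

open MvPowerSeries Finset

noncomputable section

/-- The ring `R = ℂ[[α,β]]` of formal power series in two commuting variables. -/
abbrev R2 : Type := MvPowerSeries (Fin 2) ℂ

/-- The variable `α`. -/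
def pa : R2 := MvPowerSeries.X 0
/-- The variable `β`. -/
def pb : R2 := MvPowerSeries.X 1

/-- The matrix `A₀ = [[1,0],[α,β]]`. -/
def A0 : Matrix (Fin 2) (Fin 2) R2 := !![1, 0; pa, pb]
/-- The matrix `A₁ = [[α,β],[0,1]]`. -/
def A1 : Matrix (Fin 2) (Fin 2) R2 := !![pa, pb; 0, 1]
/-- The matrix `A₀^∞ = [[1,0],[α(1−β)⁻¹,0]]`. -/
def A0inf : Matrix (Fin 2) (Fin 2) R2 := !![1, 0; pa * (1 - pb)⁻¹, 0]
/-- The matrix `A₁^∞ = [[0,β(1−α)⁻¹],[0,1]]`. -/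
def A1inf : Matrix (Fin 2) (Fin 2) R2 := !![0, pb * (1 - pa)⁻¹; 0, 1]

/-- Extended power: `A^k` for `k ∈ ℕ`, and `Ainf` for `k = ∞`. -/
def powE (A Ainf : Matrix (Fin 2) (Fin 2) R2) : ℕ∞ → Matrix (Fin 2) (Fin 2) R2 :=
  fun k => WithTop.recTopCoe Ainf (fun n => A ^ n) k

/-- `M(𝐭) = A₁^{k₀} A₀^{ℓ₀} ⋯ A₁^{k_{N-1}} A₀^{ℓ_{N-1}}`, where the extended binary
expansion `𝐭 = (k₀,ℓ₀,…,k_{N-1},ℓ_{N-1})` is encoded as `t : Fin (2*N) → ℕ∞`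
(`k_j = t (2j)`, `ℓ_j = t (2j+1)`). -/
def Mmat {N : ℕ} (t : Fin (2 * N) → ℕ∞) : Matrix (Fin 2) (Fin 2) R2 :=
  ((List.finRange N).map (fun j =>
    powE A1 A1inf (t ⟨2 * j.val, by have := j.isLt; omega⟩) *
    powE A0 A0inf (t ⟨2 * j.val + 1, by have := j.isLt; omega⟩))).prod

/-- `γ_𝐭`, the (1,1) entry of `M(𝐭)`. -/
def gam {N : ℕ} (t : Fin (2 * N) → ℕ∞) : R2 := Mmat t 0 0

/-- `2^{−(i+j)}` times the (real) coefficient `[α^i β^j] f`. -/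
def coefw (i j : ℕ) (f : R2) : ℝ :=
  ((2 : ℝ) ^ (i + j))⁻¹ *
    (MvPowerSeries.coeff (Finsupp.single (0 : Fin 2) i + Finsupp.single (1 : Fin 2) j) f).re

/-- `Δ_𝐭(a) = Σ_{i−j ≥ a} 2^{−(i+j)} [α^i β^j] γ_𝐭`. -/
def Delta {N : ℕ} (t : Fin (2 * N) → ℕ∞) (a : ℤ) : ℝ :=
  ∑' p : ℕ × ℕ, if a ≤ (p.1 : ℤ) - (p.2 : ℤ) then coefw p.1 p.2 (gam t) else 0

/-! Dominated convergence for the series `Δ`. Since `A₁ A₁^∞ = A₁^∞` and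
`A₁ (1 - A₁^∞) = α (1 - A₁^∞)`, one has `A₁^k = A₁^∞ + α^k (1 - A₁^∞)` (and symmetrically for `A₀`
with `β`), so every coefficient of `A₁^k` is eventually that of `A₁^∞`; as a coefficient of a
product only involves finitely many coefficients of the factors, every coefficient of
`γ_{𝐭^{(n)}}` is eventually that of `γ_𝐭`. On the other hand all factors have coefficients bounded
polynomially in the exponents of the monomial, uniformly in `𝐭` of a fixed length, so the terms of
`Δ_{𝐭^{(n)}}(a)` are dominated by `2^K (i+1)^K (j+1)^K 2^{-(i+j)}`, which is summable. -/

open Filter Topology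

namespace MvPowerSeries

section PolyBound

variable {σ : Type*} [DecidableEq σ]

/-- `#(Iic d)` bounds the number of terms of `coeff d (f * g)`, and the factor `2` absorbs the
two terms of a `2 × 2` matrix product. -/
def coeffWeight (d : σ →₀ ℕ) : ℝ := 2 * #(Iic d)

lemma two_le_coeffWeight (d : σ →₀ ℕ) : 2 ≤ coeffWeight d := by
  have : (1 : ℝ) ≤ #(Iic d) := by exact_mod_cast card_pos.mpr ⟨d, mem_Iic.mpr le_rfl⟩
  rw [coeffWeight]
  linarith

lemma coeffWeight_nonneg (d : σ →₀ ℕ) : 0 ≤ coeffWeight d :=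
  zero_le_two.trans (two_le_coeffWeight d)

lemma coeffWeight_mono {u d : σ →₀ ℕ} (h : u ≤ d) : coeffWeight u ≤ coeffWeight d := by
  unfold coeffWeight
  gcongr

lemma card_antidiagonal_le_card_Iic (d : σ →₀ ℕ) : #(antidiagonal d) ≤ #(Iic d) :=
  card_le_card_of_injOn Prod.fst
    (fun _ hp => mem_Iic.mpr (le_of_add_le_left (mem_antidiagonal.mp hp).le))
    (fun _ hp q hq h => Prod.ext h <| add_left_cancel <|
      (mem_antidiagonal.mp hp).trans ((congrArg (· + q.2) h).trans (mem_antidiagonal.mp hq)).symm)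

lemma coeffWeight_eq_prod [Fintype σ] (d : σ →₀ ℕ) :
    coeffWeight d = 2 * ∏ i, ((d i : ℝ) + 1) := by
  rw [coeffWeight, Finsupp.card_Iic, ← prod_subset (subset_univ d.support)]
  · simp
  · intro i _ hi
    simp [Finsupp.notMem_support_iff.mp hi]

variable {𝕜 : Type*} [NormedRing 𝕜]

def CoeffPolyBounded (k : ℕ) (f : MvPowerSeries σ 𝕜) : Prop :=
  ∀ d, ‖coeff d f‖ ≤ coeffWeight d ^ k

namespace CoeffPolyBounded

variable {k k₁ k₂ : ℕ} {f g : MvPowerSeries σ 𝕜}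

lemma mono (h : k ≤ k₁) (hf : CoeffPolyBounded k f) : CoeffPolyBounded k₁ f :=
  fun d => (hf d).trans <| pow_le_pow_right₀ (one_le_two.trans (two_le_coeffWeight d)) h

lemma of_norm_coeff_le_one (hf : ∀ d, ‖coeff d f‖ ≤ 1) : CoeffPolyBounded 0 f :=
  fun d => (hf d).trans_eq (pow_zero _).symm

lemma zero : CoeffPolyBounded k (0 : MvPowerSeries σ 𝕜) :=
  fun d => by simpa using pow_nonneg (coeffWeight_nonneg d) k

lemma one [NormOneClass 𝕜] : CoeffPolyBounded 0 (1 : MvPowerSeries σ 𝕜) :=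
  of_norm_coeff_le_one fun d => by
    rw [coeff_one]
    split_ifs <;> simp

lemma X_pow [NormOneClass 𝕜] (s : σ) (n : ℕ) : CoeffPolyBounded 0 (X s ^ n : MvPowerSeries σ 𝕜) :=
  of_norm_coeff_le_one fun d => by
    rw [coeff_X_pow]
    split_ifs <;> simp

lemma neg (hf : CoeffPolyBounded k f) : CoeffPolyBounded k (-f) :=
  fun d => by simpa using hf d

lemma add (hf : CoeffPolyBounded k f) (hg : CoeffPolyBounded k g) :
    CoeffPolyBounded (k + 1) (f + g) := fun d =>
  calc ‖coeff d (f + g)‖ ≤ coeffWeight d ^ k + coeffWeight d ^ k :=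
        (map_add (coeff d) f g ▸ norm_add_le _ _).trans (add_le_add (hf d) (hg d))
    _ ≤ coeffWeight d ^ (k + 1) := by
        rw [pow_succ, ← two_mul, mul_comm]
        exact mul_le_mul_of_nonneg_left (two_le_coeffWeight d)
          (pow_nonneg (coeffWeight_nonneg d) k)

lemma sub (hf : CoeffPolyBounded k f) (hg : CoeffPolyBounded k g) :
    CoeffPolyBounded (k + 1) (f - g) :=
  sub_eq_add_neg f g ▸ hf.add hg.neg

lemma mul (hf : CoeffPolyBounded k₁ f) (hg : CoeffPolyBounded k₂ g) :
    CoeffPolyBounded (k₁ + k₂ + 1) (f * g) := fun d =>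
  calc ‖coeff d (f * g)‖ ≤ ∑ p ∈ antidiagonal d, ‖coeff p.1 f * coeff p.2 g‖ := by
        rw [coeff_mul]
        exact norm_sum_le _ _
    _ ≤ ∑ _p ∈ antidiagonal d, coeffWeight d ^ k₁ * coeffWeight d ^ k₂ := by
        refine sum_le_sum fun p hp => (norm_mul_le _ _).trans ?_
        have hle := mem_antidiagonal.mp hp
        exact mul_le_mul
          ((hf p.1).trans (pow_le_pow_left₀ (coeffWeight_nonneg _)
            (coeffWeight_mono (le_of_add_le_left hle.le)) k₁))
          ((hg p.2).trans (pow_le_pow_left₀ (coeffWeight_nonneg _)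
            (coeffWeight_mono (le_of_add_le_right hle.le)) k₂))
          (norm_nonneg _) (pow_nonneg (coeffWeight_nonneg d) _)
    _ ≤ coeffWeight d * (coeffWeight d ^ k₁ * coeffWeight d ^ k₂) := by
        rw [sum_const, nsmul_eq_mul]
        refine mul_le_mul_of_nonneg_right ?_ (by positivity [coeffWeight_nonneg d])
        have : (#(antidiagonal d) : ℝ) ≤ #(Iic d) := by
          exact_mod_cast card_antidiagonal_le_card_Iic d
        unfold coeffWeight
        linarith
    _ = coeffWeight d ^ (k₁ + k₂ + 1) := by ring

lemma X [NormOneClass 𝕜] (s : σ) : CoeffPolyBounded 0 (MvPowerSeries.X s : MvPowerSeries σ 𝕜) :=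
  pow_one (MvPowerSeries.X s : MvPowerSeries σ 𝕜) ▸ X_pow s 1

lemma matrix_one [NormOneClass 𝕜] {ι : Type*} [DecidableEq ι] (i j : ι) :
    CoeffPolyBounded 0 ((1 : Matrix ι ι (MvPowerSeries σ 𝕜)) i j) := by
  rw [Matrix.one_apply]
  split_ifs
  exacts [one, zero]

lemma matrix_mul {k₁ k₂ : ℕ} {M M' : Matrix (Fin 2) (Fin 2) (MvPowerSeries σ 𝕜)}
    (hM : ∀ i j, CoeffPolyBounded k₁ (M i j)) (hM' : ∀ i j, CoeffPolyBounded k₂ (M' i j))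
    (i j : Fin 2) : CoeffPolyBounded (k₁ + k₂ + 2) ((M * M') i j) := by
  rw [Matrix.mul_apply, Fin.sum_univ_two]
  exact ((hM i 0).mul (hM' 0 j)).add ((hM i 1).mul (hM' 1 j))

lemma list_prod [NormOneClass 𝕜] {k : ℕ} {l : List (Matrix (Fin 2) (Fin 2) (MvPowerSeries σ 𝕜))}
    (hl : ∀ M ∈ l, ∀ i j, CoeffPolyBounded k (M i j)) (i j : Fin 2) :
    CoeffPolyBounded ((k + 2) * l.length) (l.prod i j) := by
  induction l generalizing i j with
  | nil => exact matrix_one i j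
  | cons M l ih =>
    rw [List.prod_cons, List.length_cons]
    refine (matrix_mul (hl M List.mem_cons_self)
      (ih fun M' hM' => hl M' (List.mem_cons_of_mem _ hM')) i j).mono (le_of_eq (by ring))

end CoeffPolyBounded

end PolyBound

section EventuallyCoeffEq

variable {σ R α : Type*} [Semiring R] {l : Filter α}

def EventuallyCoeffEq (l : Filter α) (F : α → MvPowerSeries σ R) (F₀ : MvPowerSeries σ R) :
    Prop :=
  ∀ d, ∀ᶠ n in l, coeff d (F n) = coeff d F₀

lemma EventuallyCoeffEq.mul {F G : α → MvPowerSeries σ R} {F₀ G₀ : MvPowerSeries σ R}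
    (hF : EventuallyCoeffEq l F F₀) (hG : EventuallyCoeffEq l G G₀) :
    EventuallyCoeffEq l (fun n => F n * G n) (F₀ * G₀) := by
  classical
  intro d
  have hF' := (antidiagonal d).eventually_all.mpr fun p _ => hF p.1
  have hG' := (antidiagonal d).eventually_all.mpr fun p _ => hG p.2
  filter_upwards [hF', hG'] with n hFn hGn
  simp only [coeff_mul]
  exact sum_congr rfl fun p hp => by rw [hFn p hp, hGn p hp]

variable {ι : Type*} [Fintype ι]

lemma EventuallyCoeffEq.matrix_mul {M M' : α → Matrix ι ι (MvPowerSeries σ R)}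
    {M₀ M₀' : Matrix ι ι (MvPowerSeries σ R)}
    (hM : ∀ i j, EventuallyCoeffEq l (M · i j) (M₀ i j))
    (hM' : ∀ i j, EventuallyCoeffEq l (M' · i j) (M₀' i j)) (i j : ι) :
    EventuallyCoeffEq l (fun n => (M n * M' n) i j) ((M₀ * M₀') i j) := by
  intro d
  filter_upwards [eventually_all.mpr fun k => (hM i k).mul (hM' k j) d] with n hn
  simp only [Matrix.mul_apply, map_sum]
  exact sum_congr rfl fun k _ => hn k

lemma EventuallyCoeffEq.list_prod [DecidableEq ι] {β : Type*} (L : List β)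
    {P : α → β → Matrix ι ι (MvPowerSeries σ R)} {P₀ : β → Matrix ι ι (MvPowerSeries σ R)}
    (h : ∀ b ∈ L, ∀ i j, EventuallyCoeffEq l (P · b i j) (P₀ b i j)) (i j : ι) :
    EventuallyCoeffEq l (fun n => (L.map (P n)).prod i j) ((L.map P₀).prod i j) := by
  induction L generalizing i j with
  | nil => exact fun d => Eventually.of_forall fun n => rfl
  | cons b L ih =>
    simp only [List.map_cons, List.prod_cons]
    exact matrix_mul (h b List.mem_cons_self)
      (ih fun b' hb' => h b' (List.mem_cons_of_mem _ hb')) i j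

end EventuallyCoeffEq

lemma coeff_X_pow_mul_of_lt {σ R : Type*} [Semiring R] {s : σ} {k : ℕ} {d : σ →₀ ℕ}
    (h : d s < k) (f : MvPowerSeries σ R) : coeff d (X s ^ k * f) = 0 := by
  classical
  rw [X_pow_eq, coeff_monomial_mul, if_neg (by rw [Finsupp.single_le_iff]; omega)]

lemma inv_one_sub_X_eq_one_add {σ k : Type*} [Field k] (s : σ) :
    ((1 : MvPowerSeries σ k) - X s)⁻¹ = 1 + X s * (1 - X s)⁻¹ := by
  linear_combination MvPowerSeries.mul_inv_cancel (1 - X s : MvPowerSeries σ k) (by simp)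

lemma norm_coeff_inv_one_sub_X_le_one {σ 𝕜 : Type*} [NormedField 𝕜] (s : σ) (d : σ →₀ ℕ) :
    ‖coeff d ((1 : MvPowerSeries σ 𝕜) - X s)⁻¹‖ ≤ 1 := by
  classical
  induction hn : d s generalizing d with
  | zero =>
    rw [inv_one_sub_X_eq_one_add, map_add, ← pow_one (X s), coeff_X_pow_mul_of_lt (by omega),
      add_zero, coeff_one]
    split_ifs <;> simp
  | succ n ih =>
    have hd : d ≠ 0 := fun h => by simp [h] at hn
    rw [inv_one_sub_X_eq_one_add, map_add, coeff_one, if_neg hd, zero_add, X_def,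
      coeff_monomial_mul, if_pos (Finsupp.single_le_iff.mpr (by omega)), one_mul]
    exact ih _ (by simp [hn])

lemma CoeffPolyBounded.inv_one_sub_X {σ 𝕜 : Type*} [DecidableEq σ] [NormedField 𝕜] (s : σ) :
    CoeffPolyBounded 0 ((1 : MvPowerSeries σ 𝕜) - MvPowerSeries.X s)⁻¹ :=
  CoeffPolyBounded.of_norm_coeff_le_one (norm_coeff_inv_one_sub_X_le_one s)

end MvPowerSeries

lemma pow_eq_add_smul_one_sub {R A : Type*} [CommSemiring R] [Ring A] [Algebra R A]
    {a e : A} {c : R} (he : a * e = e) (hc : a * (1 - e) = c • (1 - e)) (k : ℕ) :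
    a ^ k = e + c ^ k • (1 - e) := by
  induction k with
  | zero => simp
  | succ k ih => rw [pow_succ', ih, mul_add, he, mul_smul_comm, hc, smul_smul, pow_succ]

lemma powE_top (A Ainf : Matrix (Fin 2) (Fin 2) R2) : powE A Ainf ⊤ = Ainf := rfl

lemma powE_coe (A Ainf : Matrix (Fin 2) (Fin 2) R2) (k : ℕ) : powE A Ainf k = A ^ k := rfl

lemma A1_pow (k : ℕ) : A1 ^ k = A1inf + pa ^ k • (1 - A1inf) := by
  have h : (1 - pa)⁻¹ = 1 + pa * (1 - pa)⁻¹ := inv_one_sub_X_eq_one_add 0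
  refine pow_eq_add_smul_one_sub ?_ ?_ k <;> refine Matrix.ext fun i j => ?_ <;>
    fin_cases i <;> fin_cases j <;> simp [A1, A1inf, Matrix.mul_apply]
  linear_combination (-pb) * h

lemma A0_pow (k : ℕ) : A0 ^ k = A0inf + pb ^ k • (1 - A0inf) := by
  have h : (1 - pb)⁻¹ = 1 + pb * (1 - pb)⁻¹ := inv_one_sub_X_eq_one_add 1
  refine pow_eq_add_smul_one_sub ?_ ?_ k <;> refine Matrix.ext fun i j => ?_ <;>
    fin_cases i <;> fin_cases j <;> simp [A0, A0inf, Matrix.mul_apply]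
  linear_combination (-pa) * h

section PowE

variable {A Ainf : Matrix (Fin 2) (Fin 2) R2} {s : Fin 2}

lemma eventuallyCoeffEq_powE (hpow : ∀ k, A ^ k = Ainf + (X s : R2) ^ k • (1 - Ainf))
    {α : Type*} {l : Filter α} {e : ℕ∞} {en : α → ℕ∞} (h : Tendsto en l (𝓝 e)) (i j : Fin 2) :
    EventuallyCoeffEq l (fun n => powE A Ainf (en n) i j) (powE A Ainf e i j) := by
  intro d
  cases e with
  | top =>
    filter_upwards [ENat.tendsto_nhds_top_iff_natCast_lt.mp h (d s)] with n hn
    cases hk : en n with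
    | top => rfl
    | coe k =>
      rw [hk, Nat.cast_lt] at hn
      rw [powE_coe, powE_top, hpow, Matrix.add_apply, Matrix.smul_apply, smul_eq_mul, map_add,
        coeff_X_pow_mul_of_lt hn, add_zero]
  | coe m =>
    rw [ENat.nhds_eq_pure (ENat.natCast_ne_top m)] at h
    filter_upwards [tendsto_pure.mp h] with n hn
    rw [hn]

lemma coeffPolyBounded_powE (hpow : ∀ k, A ^ k = Ainf + (X s : R2) ^ k • (1 - Ainf)) {k : ℕ}
    (hAinf : ∀ i j, CoeffPolyBounded k (Ainf i j)) (e : ℕ∞) (i j : Fin 2) :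
    CoeffPolyBounded (k + 3) (powE A Ainf e i j) := by
  cases e with
  | top => exact (hAinf i j).mono (by omega)
  | coe n =>
    rw [powE_coe, hpow, Matrix.add_apply, Matrix.smul_apply, smul_eq_mul, Matrix.sub_apply]
    have hX : CoeffPolyBounded (k + 2) ((X s : R2) ^ n * ((1 : Matrix _ _ R2) i j - Ainf i j)) :=
      ((CoeffPolyBounded.X_pow s n).mul
        (((CoeffPolyBounded.matrix_one i j).mono (Nat.zero_le k)).sub (hAinf i j))).mono
        (by omega)
    exact ((hAinf i j).mono (by omega)).add hX

end PowE

lemma coeffPolyBounded_A1inf (i j : Fin 2) : CoeffPolyBounded 1 (A1inf i j) := by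
  fin_cases i <;> fin_cases j
  exacts [CoeffPolyBounded.zero, (CoeffPolyBounded.X 1).mul (CoeffPolyBounded.inv_one_sub_X 0),
    CoeffPolyBounded.zero, CoeffPolyBounded.one.mono zero_le_one]

lemma coeffPolyBounded_A0inf (i j : Fin 2) : CoeffPolyBounded 1 (A0inf i j) := by
  fin_cases i <;> fin_cases j
  exacts [CoeffPolyBounded.one.mono zero_le_one, CoeffPolyBounded.zero,
    (CoeffPolyBounded.X 0).mul (CoeffPolyBounded.inv_one_sub_X 1), CoeffPolyBounded.zero]

lemma coeffPolyBounded_gam {N : ℕ} (t : Fin (2 * N) → ℕ∞) :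
    CoeffPolyBounded (12 * N) (gam t) := by
  have h := CoeffPolyBounded.list_prod (k := 10) (l := (List.finRange N).map fun j =>
      powE A1 A1inf (t ⟨2 * j.val, by have := j.isLt; omega⟩) *
      powE A0 A0inf (t ⟨2 * j.val + 1, by have := j.isLt; omega⟩)) (by
    simp only [List.mem_map]
    rintro M ⟨j, -, rfl⟩
    exact CoeffPolyBounded.matrix_mul (coeffPolyBounded_powE A1_pow coeffPolyBounded_A1inf _)
      (coeffPolyBounded_powE A0_pow coeffPolyBounded_A0inf _)) 0 0
  rwa [List.length_map, List.length_finRange] at h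

lemma eventuallyCoeffEq_gam {N : ℕ} {α : Type*} {l : Filter α} {t : Fin (2 * N) → ℕ∞}
    {ts : α → Fin (2 * N) → ℕ∞} (hconv : ∀ i, Tendsto (ts · i) l (𝓝 (t i))) :
    EventuallyCoeffEq l (fun n => gam (ts n)) (gam t) :=
  EventuallyCoeffEq.list_prod (List.finRange N) (fun _ _ =>
    EventuallyCoeffEq.matrix_mul (eventuallyCoeffEq_powE A1_pow (hconv _))
      (eventuallyCoeffEq_powE A0_pow (hconv _))) 0 0

lemma summable_succ_pow_mul_inv_two_pow (K : ℕ) :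
    Summable fun n : ℕ => ((n : ℝ) + 1) ^ K * (2⁻¹ : ℝ) ^ n := by
  have h := (summable_nat_add_iff 1).mpr <| summable_pow_mul_geometric_of_norm_lt_one K
    (r := (2⁻¹ : ℝ)) (by norm_num)
  refine (h.mul_left 2).congr fun n => ?_
  push_cast
  ring

lemma abs_coefw_le {K : ℕ} {f : R2} (hf : CoeffPolyBounded K f) (i j : ℕ) :
    |coefw i j f| ≤
      2 ^ K * ((((i : ℝ) + 1) ^ K * (2⁻¹ : ℝ) ^ i) * (((j : ℝ) + 1) ^ K * (2⁻¹ : ℝ) ^ j)) :=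
  calc |coefw i j f|
      ≤ ((2 : ℝ) ^ (i + j))⁻¹ *
          coeffWeight (Finsupp.single (0 : Fin 2) i + Finsupp.single 1 j) ^ K := by
        rw [coefw, abs_mul, abs_of_pos (by positivity)]
        exact mul_le_mul_of_nonneg_left ((Complex.abs_re_le_norm _).trans (hf _)) (by positivity)
    _ = _ := by
        rw [coeffWeight_eq_prod, Fin.prod_univ_two]
        simp only [pow_add, mul_inv_rev, Finsupp.coe_add, Pi.add_apply, Finsupp.single_eq_same,
          Finsupp.single_eq_of_ne zero_ne_one, Finsupp.single_eq_of_ne one_ne_zero, add_zero,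
          zero_add, mul_pow, inv_pow]
        ring

lemma tendsto_tsum_coefw {α : Type*} {l : Filter α} {F : α → R2} {F₀ : R2} {K : ℕ}
    (hbound : ∀ n, CoeffPolyBounded K (F n)) (hF : EventuallyCoeffEq l F F₀)
    (P : ℕ × ℕ → Prop) [DecidablePred P] :
    Tendsto (fun n => ∑' p : ℕ × ℕ, if P p then coefw p.1 p.2 (F n) else 0) l
      (𝓝 (∑' p : ℕ × ℕ, if P p then coefw p.1 p.2 F₀ else 0)) := by
  have hsum := summable_succ_pow_mul_inv_two_pow K
  refine tendsto_tsum_of_dominated_convergence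
    ((hsum.mul_of_nonneg hsum (fun _ => by positivity) (fun _ => by positivity)).mul_left (2 ^ K))
    (fun p => ?_) (Eventually.of_forall fun n p => ?_)
  · split_ifs
    · refine tendsto_const_nhds.congr' ?_
      filter_upwards [hF _] with n hn
      rw [coefw, coefw, hn]
    · exact tendsto_const_nhds
  · rw [Real.norm_eq_abs]
    split_ifs
    · exact abs_coefw_le (hbound n) p.1 p.2
    · rw [abs_zero]
      positivity

theorem Delta_limit_commute_general (N : ℕ)
    (t : Fin (2 * N) → ℕ∞) (a : ℤ)
    (ts : ℕ → Fin (2 * N) → ℕ∞)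
    (hconv : ∀ i, Filter.Tendsto (fun n => ts n i) Filter.atTop (nhds (t i))) :
    Filter.Tendsto (fun n => Delta (ts n) a) Filter.atTop (nhds (Delta t a)) :=
  tendsto_tsum_coefw (fun n => coeffPolyBounded_gam (ts n)) (eventuallyCoeffEq_gam hconv)
    (fun p => a ≤ (p.1 : ℤ) - (p.2 : ℤ))

/-- **Proposition (computing `Δ_𝐭(a)` commutes with limits).**
If `𝐭^{(n)} → 𝐭` componentwise in `ℕ̄₊` (with its usual topology: convergence to a
finite value means being eventually equal to it, convergence to `∞` means tending
to `∞`), then `Δ_{𝐭^{(n)}}(a) → Δ_𝐭(a)`. -/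
theorem Delta_limit_commute (N : ℕ) (hN : 1 ≤ N)
    (t : Fin (2 * N) → ℕ∞) (ht : ∀ i, t i ≠ 0) (a : ℤ)
    (ts : ℕ → Fin (2 * N) → ℕ∞) (hts : ∀ n i, ts n i ≠ 0)
    (hconv : ∀ i, Filter.Tendsto (fun n => ts n i) Filter.atTop (nhds (t i))) :
    Filter.Tendsto (fun n => Delta (ts n) a) Filter.atTop (nhds (Delta t a)) :=
  Delta_limit_commute_general N t a ts hconv
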